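/- Let M' be a matroid on a finite ground set N' with rank function rk', let w : N' → ℕ with 1 ≤ w(e) ≤ W for all e ∈ N', and let M₂ be the unfolded matroid on N = {(e,i) : e ∈ N', 1 ≤ i ≤ w(e)} whose independent sets are the I ⊆ N such that for every i ∈ {1,…,W} the set {e : (e, w(e)-i+1) ∈ I} is independent in M'. Then for every subset S ⊆ N, the rank of S in M₂ equals ∑_{i=1}^{W} rk'({e ∈ N' : (e, w(e)-i+1) ∈ S}). -/

import Mathlib

/-!
Under `p = (e, j) ↦ (w e - j + 1, e)` a set `I` of the unfolded ground set splits into its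
reverse layers `proj2 w I i`, and `M₂`-independence constrains each layer separately. So a
maximal independent subset of `S` is a union of maximal independent subsets of the layers
of `S`, and the ranks add up.
-/

open Finset

/-- A matroid on a finite ground set, given by its family of independent sets. -/
structure FinMatroid (α : Type*) [DecidableEq α] [Fintype α] where
  Indep : Finset α → Prop
  indep_empty : Indep ∅
  indep_subset : ∀ ⦃A B : Finset α⦄, A ⊆ B → Indep B → Indep A
  indep_exchange : ∀ ⦃A B : Finset α⦄, Indep A → Indep B → B.card < A.card →
    ∃ x ∈ A \ B, Indep (insert x B)

/-- The rank of a set `S` in a matroid: the size of a largest independent subset of `S`. -/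
noncomputable def FinMatroid.rank {α : Type*} [DecidableEq α] [Fintype α]
    (M : FinMatroid α) (S : Finset α) : ℕ :=
  sSup {n : ℕ | ∃ I ⊆ S, M.Indep I ∧ I.card = n}

/-- The rank of `S` with respect to an arbitrary independence predicate. -/
noncomputable def frank {β : Type*} (Ind : Finset β → Prop) (S : Finset β) : ℕ :=
  sSup {n : ℕ | ∃ I ⊆ S, Ind I ∧ I.card = n}

variable {α : Type*} [DecidableEq α] [Fintype α]

/-- The unfolded ground set `N = {(e,i) : e ∈ N', 1 ≤ i ≤ w e}`. -/
def unfoldGround (w : α → ℕ) : Finset (α × ℕ) :=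
  Finset.univ.biUnion fun e => (Finset.Icc 1 (w e)).image fun i => (e, i)

/-- The `i`-th layer projection `{e ∈ N' : (e,i) ∈ I}`. -/
def proj1 (I : Finset (α × ℕ)) (i : ℕ) : Finset α :=
  Finset.univ.filter fun e => (e, i) ∈ I

/-- The `i`-th reverse-layer projection `{e ∈ N' : (e, w e - i + 1) ∈ I}`. -/
def proj2 (w : α → ℕ) (I : Finset (α × ℕ)) (i : ℕ) : Finset α :=
  Finset.univ.filter fun e => i ≤ w e ∧ (e, w e - i + 1) ∈ I

/-- Independence in the unfolded matroid `M₁`. -/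
def UnfoldIndep1 (M' : FinMatroid α) (w : α → ℕ) (W : ℕ) (I : Finset (α × ℕ)) : Prop :=
  I ⊆ unfoldGround w ∧ ∀ i ∈ Finset.Icc 1 W, M'.Indep (proj1 I i)

/-- Independence in the unfolded matroid `M₂`. -/
def UnfoldIndep2 (M' : FinMatroid α) (w : α → ℕ) (W : ℕ) (I : Finset (α × ℕ)) : Prop :=
  I ⊆ unfoldGround w ∧ ∀ i ∈ Finset.Icc 1 W, M'.Indep (proj2 w I i)

/-- The unfolding `{(e,i) : e ∈ S', 1 ≤ i ≤ w e}` of a set `S' ⊆ N'`. -/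
def unfoldSet (w : α → ℕ) (S' : Finset α) : Finset (α × ℕ) :=
  S'.biUnion fun e => (Finset.Icc 1 (w e)).image fun i => (e, i)

section frank

variable {β : Type*} {Ind : Finset β → Prop}

lemma card_le_frank {S I : Finset β} (hIS : I ⊆ S) (hI : Ind I) : I.card ≤ frank Ind S :=
  le_csSup ⟨S.card, by rintro _ ⟨J, hJS, -, rfl⟩; exact card_le_card hJS⟩ ⟨I, hIS, hI, rfl⟩

lemma exists_subset_card_eq_frank (h₀ : Ind ∅) (S : Finset β) :
    ∃ I ⊆ S, Ind I ∧ I.card = frank Ind S :=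
  Nat.sSup_mem (s := {n | ∃ I ⊆ S, Ind I ∧ I.card = n}) ⟨0, ∅, empty_subset S, h₀, rfl⟩
    ⟨S.card, by rintro _ ⟨J, hJS, -, rfl⟩; exact card_le_card hJS⟩

end frank

section unfolding

variable {w : α → ℕ}

lemma mem_unfoldGround {p : α × ℕ} : p ∈ unfoldGround w ↔ 1 ≤ p.2 ∧ p.2 ≤ w p.1 := by
  obtain ⟨e, j⟩ := p
  simp [unfoldGround]

@[simp]
lemma mem_proj2 {I : Finset (α × ℕ)} {i : ℕ} {e : α} :
    e ∈ proj2 w I i ↔ i ≤ w e ∧ (e, w e - i + 1) ∈ I := by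
  simp [proj2]

lemma proj2_mono {I S : Finset (α × ℕ)} (h : I ⊆ S) (i : ℕ) : proj2 w I i ⊆ proj2 w S i :=
  fun _ he => by
    rw [mem_proj2] at he ⊢
    exact ⟨he.1, h he.2⟩

/-- The element `(e, j)` of the unfolded ground set lies in the reverse layer `w e - j + 1`,
and `I` is the disjoint union of its reverse layers. -/
lemma card_eq_sum_card_proj2 {W : ℕ} (hW : ∀ e, w e ≤ W) {I : Finset (α × ℕ)}
    (hI : I ⊆ unfoldGround w) : I.card = ∑ i ∈ Icc 1 W, (proj2 w I i).card := by
  rw [card_eq_sum_card_fiberwise (f := fun p => w p.1 - p.2 + 1) (t := Icc 1 W) fun p hp => by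
    have := mem_unfoldGround.1 (hI hp)
    have := hW p.1
    simp only [coe_Icc, Set.mem_Icc]
    omega]
  refine sum_congr rfl fun i hi => ?_
  have hfiber : {p ∈ I | w p.1 - p.2 + 1 = i} = (proj2 w I i).image fun e => (e, w e - i + 1) := by
    ext ⟨e, j⟩
    simp only [mem_filter, mem_image, mem_proj2, Prod.mk.injEq]
    constructor
    · rintro ⟨hp, rfl⟩
      have := mem_unfoldGround.1 (hI hp)
      dsimp only at this
      refine ⟨e, ⟨by omega, ?_⟩, rfl, by omega⟩
      rwa [show w e - (w e - j + 1) + 1 = j by omega]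
    · rintro ⟨e, ⟨hie, hp⟩, rfl, rfl⟩
      exact ⟨hp, by have := mem_Icc.1 hi; omega⟩
  rw [hfiber, card_image_of_injective _ fun e e' h => (Prod.mk.inj h).1]

/-- Reverse layers can be prescribed independently, since `i ↦ w e - i + 1` is injective
on `i ≤ w e`. -/
lemma exists_subset_proj2_eq (S : Finset (α × ℕ)) (T : Finset ℕ) (J : ℕ → Finset α)
    (hJ : ∀ i ∈ T, J i ⊆ proj2 w S i) : ∃ I ⊆ S, ∀ i ∈ T, proj2 w I i = J i := by
  have hJS : ∀ i ∈ T, ∀ e ∈ J i, i ≤ w e ∧ (e, w e - i + 1) ∈ S :=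
    fun i hi e he => mem_proj2.1 (hJ i hi he)
  refine ⟨T.biUnion fun i => (J i).image fun e => (e, w e - i + 1), ?_, fun i hi => ?_⟩
  · simp only [biUnion_subset, image_subset_iff]
    exact fun i hi e he => (hJS i hi e he).2
  · ext e
    simp only [mem_proj2, mem_biUnion, mem_image, Prod.mk.injEq]
    constructor
    · rintro ⟨hie, i', hi', e, he, rfl, hidx⟩
      obtain rfl : i' = i := by have := (hJS i' hi' e he).1; omega
      exact he
    · exact fun he => ⟨(hJS i hi e he).1, i, hi, e, he, rfl, rfl⟩

end unfolding

/-- the rank of `S ⊆ N` in the unfolded matroid `M₂` equals the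
sum over the layers `i ∈ {1,…,W}` of the `M'`-rank of the set
`{e ∈ N' : (e, w e - i + 1) ∈ S}`. -/
theorem unfolded_rank_two (M' : FinMatroid α) (w : α → ℕ) (W : ℕ)
    (hw : ∀ e : α, 1 ≤ w e ∧ w e ≤ W)
    (S : Finset (α × ℕ)) (hS : S ⊆ unfoldGround w) :
    frank (UnfoldIndep2 M' w W) S = ∑ i ∈ Finset.Icc 1 W, M'.rank (proj2 w S i) := by
  have hW : ∀ e, w e ≤ W := fun e => (hw e).2
  have hIndep₀ : UnfoldIndep2 M' w W ∅ :=
    ⟨empty_subset _, fun i _ => by simpa [proj2] using M'.indep_empty⟩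
  apply le_antisymm
  · obtain ⟨I, hIS, hI, hcard⟩ := exists_subset_card_eq_frank hIndep₀ S
    rw [← hcard, card_eq_sum_card_proj2 hW hI.1]
    exact sum_le_sum fun i hi => card_le_frank (proj2_mono hIS i) (hI.2 i hi)
  · choose J hJS hJ hJcard using fun i => exists_subset_card_eq_frank M'.indep_empty (proj2 w S i)
    obtain ⟨I, hIS, hIJ⟩ := exists_subset_proj2_eq S (Icc 1 W) J fun i _ => hJS i
    have hI : UnfoldIndep2 M' w W I := ⟨hIS.trans hS, fun i hi => hIJ i hi ▸ hJ i⟩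
    calc ∑ i ∈ Icc 1 W, M'.rank (proj2 w S i)
        = I.card := by
          rw [card_eq_sum_card_proj2 hW hI.1]
          exact sum_congr rfl fun i hi => by rw [hIJ i hi, hJcard i]; rfl
      _ ≤ frank (UnfoldIndep2 M' w W) S := card_le_frank hIS hI
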